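/- Let a(s,t) be a concave function of two real variables, strictly increasing in t, and let k(s,x) denote the inverse of a with respect to the second variable (so that a(s, k(s,x)) = x for all s, x in the relevant domains). Then k is convex as a function of (s,x) jointly. -/
import Mathlib


/-- If `a(s,t)` is concave in `(s,t)` jointly, strictly increasing and surjective in `t`
for each fixed `s`, and `k` is the inverse of `a` in the second variable, then `k` is
convex jointly in `(s,x)`. -/
theorem concave_inverse_convex (a k : ℝ × ℝ → ℝ)
    (ha : ConcaveOn ℝ Set.univ a)
    (hmono : ∀ s : ℝ, StrictMono fun t => a (s, t))
    (hsurj : ∀ s : ℝ, Function.Surjective fun t => a (s, t))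
    (hk : ∀ s x : ℝ, a (s, k (s, x)) = x) :
    ConvexOn ℝ Set.univ k := by
  refine ⟨convex_univ, ?_⟩
  rintro ⟨s₁, x₁⟩ - ⟨s₂, x₂⟩ - p q hp hq hpq
  set t₁ := k (s₁, x₁)
  set t₂ := k (s₂, x₂)
  have hconc := ha.2 (Set.mem_univ (s₁, t₁)) (Set.mem_univ (s₂, t₂)) hp hq hpq
  simp only [Prod.smul_mk, Prod.mk_add_mk, smul_eq_mul] at hconc
  rw [hk, hk] at hconc
  have key : a (p * s₁ + q * s₂, k (p * s₁ + q * s₂, p * x₁ + q * x₂))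
      ≤ a (p * s₁ + q * s₂, p * t₁ + q * t₂) := by
    rw [hk]
    exact hconc
  have := (hmono (p * s₁ + q * s₂)).le_iff_le.mp key
  simpa using this
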